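/- arXiv:1508.06883 — 2 statements merged into one kernel-verified Lean document; each statement's English description precedes it below -/
import Mathlib

section
/- Let k, n, m be integers with k ≥ 1, n ≥ k, 0 ≤ m ≤ n − k and n ≥ m. Then for every fixed x > 0, M_{n,k}(φ_{x,m}; x) = ( Σ_{j=0}^{m} (−1)^j · C(m,j) · ((n−m+j)!·(n−k+m−j)!)/(n!·(n−k)!) ) · x^m, where φ_{x,m}(t) = (t−x)^m and C(m,j) is the binomial coefficient. -/
open MeasureTheory Set

/-- The Gamma-type operator `M_{n,k}(f;x)`. -/
noncomputable def Mnk (n k : ℕ) (f : ℝ → ℝ) (x : ℝ) : ℝ :=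
  (((2 * n - k + 1).factorial : ℝ) * x ^ (n + 1) /
      ((n.factorial : ℝ) * ((n - k).factorial : ℝ))) *
    ∫ t in Ioi (0 : ℝ), t ^ (n - k) / (x + t) ^ (2 * n - k + 2) * f t

/-- The polynomial weight: `w_0 = 1`, `w_p(x) = 1/(1+x^p)` for `p ≥ 1`. -/
noncomputable def wp (p : ℕ) (x : ℝ) : ℝ := if p = 0 then 1 else 1 / (1 + x ^ p)

/-- The weighted sup-norm `‖f‖_p = sup_{x ≥ 0} w_p(x)|f(x)|`. -/
noncomputable def pNorm (p : ℕ) (f : ℝ → ℝ) : ℝ :=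
  ⨆ x : {x : ℝ // 0 ≤ x}, wp p x.val * |f x.val|

/-- Second symmetric difference `Δ_h² f`. -/
def Delta2 (h : ℝ) (f : ℝ → ℝ) (x : ℝ) : ℝ := f (x + 2 * h) - 2 * f (x + h) + f x

/-- Second weighted modulus of smoothness `ω_p²(f;δ)`. -/
noncomputable def omega2 (p : ℕ) (f : ℝ → ℝ) (δ : ℝ) : ℝ :=
  ⨆ h : {h : ℝ // 0 < h ∧ h ≤ δ}, pNorm p (Delta2 h.val f)

/-- First weighted modulus `ω_p¹(f;δ)`. -/
noncomputable def omega1 (p : ℕ) (f : ℝ → ℝ) (δ : ℝ) : ℝ :=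
  sSup {y : ℝ | ∃ t x : ℝ, 0 ≤ t ∧ 0 ≤ x ∧ |t - x| ≤ δ ∧ y = wp p x * |f t - f x|}

/-- Membership in the weighted space `C_p`: `w_p·f` is bounded and uniformly
continuous on `[0,∞)`. -/
def CpMem (p : ℕ) (f : ℝ → ℝ) : Prop :=
  (∃ B : ℝ, ∀ x ≥ (0 : ℝ), |wp p x * f x| ≤ B) ∧
    UniformContinuousOn (fun x => wp p x * f x) (Ici 0)

/-- Steklov mean `f_h`. -/
noncomputable def steklov (f : ℝ → ℝ) (h : ℝ) (x : ℝ) : ℝ :=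
  4 / h ^ 2 *
    ∫ s in (0 : ℝ)..(h / 2), ∫ t in (0 : ℝ)..(h / 2),
      (2 * f (x + s + t) - f (x + 2 * (s + t)))

/-!
Expanding `(t - x)^m` binomially reduces the central moment to the moments
`M_{n,k}(t^i; x)`, `i ≤ m`. After clearing constants these are Beta-type integrals
`∫₀^∞ t^a / (x + t)^(a+c+2) dt = a! c! / ((a+c+1)! x^(c+1))`, which follow by induction
on `a`: integrating `d/dt (t^(a+1) / (x+t)^(a+c+2))` over `(0, ∞)` lowers `a` by one.
-/

open Filter Topology
open scoped Nat

lemma pow_div_add_pow_le_rpow {x t : ℝ} (hx : 0 ≤ x) (ht : 0 < t) (a b : ℕ) :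
    t ^ a / (x + t) ^ b ≤ t ^ ((a : ℝ) - b) := by
  calc t ^ a / (x + t) ^ b ≤ t ^ a / t ^ b := by gcongr; linarith
    _ = t ^ ((a : ℝ) - b) := by rw [Real.rpow_sub ht, Real.rpow_natCast, Real.rpow_natCast]

lemma continuousOn_pow_div_add_pow {x : ℝ} (hx : 0 < x) (a b : ℕ) :
    ContinuousOn (fun t : ℝ => t ^ a / (x + t) ^ b) (Ici 0) :=
  (continuousOn_pow a).div (by fun_prop) fun t (ht : 0 ≤ t) => by positivity

lemma integrableOn_pow_div_add_pow {x : ℝ} (hx : 0 < x) {a b : ℕ} (hab : a + 2 ≤ b) :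
    IntegrableOn (fun t : ℝ => t ^ a / (x + t) ^ b) (Ioi 0) := by
  have hcont := continuousOn_pow_div_add_pow hx a b
  rw [← Ioc_union_Ioi_eq_Ioi zero_le_one]
  refine ((hcont.mono Icc_subset_Ici_self).integrableOn_Icc.mono_set Ioc_subset_Icc_self).union ?_
  have hexp : (a : ℝ) - b < -1 := by
    have : (a : ℝ) + 2 ≤ b := by exact_mod_cast hab
    linarith
  refine Integrable.mono' (integrableOn_Ioi_rpow_of_lt hexp one_pos)
    ((hcont.mono (Ioi_subset_Ici zero_le_one)).aestronglyMeasurable measurableSet_Ioi) ?_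
  filter_upwards [ae_restrict_mem measurableSet_Ioi] with t (ht : 1 < t)
  have ht0 : 0 < t := one_pos.trans ht
  rw [Real.norm_of_nonneg (by positivity)]
  exact pow_div_add_pow_le_rpow hx.le ht0 a b

lemma tendsto_pow_div_add_pow_atTop {x : ℝ} (hx : 0 ≤ x) {a b : ℕ} (hab : a < b) :
    Tendsto (fun t : ℝ => t ^ a / (x + t) ^ b) atTop (𝓝 0) := by
  have hexp : (0 : ℝ) < b - a := by
    have : (a : ℝ) < b := by exact_mod_cast hab
    linarith
  refine tendsto_of_tendsto_of_tendsto_of_le_of_le' tendsto_const_nhds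
    (by simpa only [neg_sub] using tendsto_rpow_neg_atTop hexp) ?_ ?_
  · filter_upwards [eventually_gt_atTop 0] with t ht
    positivity
  · filter_upwards [eventually_gt_atTop 0] with t ht
    exact pow_div_add_pow_le_rpow hx ht a b

lemma hasDerivAt_pow_div_add_pow {x t : ℝ} (h : x + t ≠ 0) (p q : ℕ) :
    HasDerivAt (fun s : ℝ => s ^ p / (x + s) ^ (q + 1))
      (p * t ^ (p - 1) / (x + t) ^ (q + 1) - (q + 1) * t ^ p / (x + t) ^ (q + 2)) t := by
  refine ((hasDerivAt_pow p t).fun_div (((hasDerivAt_id' t).const_add x).fun_pow (q + 1))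
    (pow_ne_zero _ h)).congr_deriv ?_
  simp only [add_tsub_cancel_right, mul_one, Nat.cast_add, Nat.cast_one]
  field_simp
  ring

lemma integral_Ioi_one_div_add_pow {x : ℝ} (hx : 0 < x) (c : ℕ) :
    ∫ t in Ioi (0 : ℝ), 1 / (x + t) ^ (c + 2) = 1 / ((c + 1) * x ^ (c + 1)) := by
  have hlim :=
    (tendsto_pow_div_add_pow_atTop hx.le (a := 0) c.succ_pos).const_mul (-(c + 1 : ℝ)⁻¹)
  rw [mul_zero] at hlim
  rw [integral_Ioi_of_hasDerivAt_of_tendsto' (fun t (ht : 0 ≤ t) => ?_)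
    (by simpa using integrableOn_pow_div_add_pow hx (a := 0) (b := c + 2) (by omega)) hlim]
  · simp [field]
  · refine ((hasDerivAt_pow_div_add_pow (x := x) (by positivity) 0 c).const_mul _).congr_deriv ?_
    simp [field]

lemma integral_Ioi_pow_succ_div_add_pow {x : ℝ} (hx : 0 < x) (a c : ℕ) :
    ∫ t in Ioi (0 : ℝ), t ^ (a + 1) / (x + t) ^ (a + c + 3) =
      (a + 1) / (a + c + 2) * ∫ t in Ioi (0 : ℝ), t ^ a / (x + t) ^ (a + c + 2) := by
  have hI₀ := integrableOn_pow_div_add_pow hx (a := a) (b := a + c + 2) (by omega)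
  have hI₁ := integrableOn_pow_div_add_pow hx (a := a + 1) (b := a + c + 3) (by omega)
  have key := integral_Ioi_of_hasDerivAt_of_tendsto' (m := 0)
    (f' := fun t => (a + 1) * (t ^ a / (x + t) ^ (a + c + 2)) -
      (a + c + 2) * (t ^ (a + 1) / (x + t) ^ (a + c + 3)))
    (fun t (ht : 0 ≤ t) => (hasDerivAt_pow_div_add_pow (x := x) (by positivity)
      (a + 1) (a + c + 1)).congr_deriv (by push_cast; ring_nf))
    ((hI₀.const_mul _).sub (hI₁.const_mul _))
    (tendsto_pow_div_add_pow_atTop hx.le (a := a + 1) (by omega))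
  rw [integral_sub (hI₀.const_mul _) (hI₁.const_mul _), integral_const_mul, integral_const_mul,
    zero_pow a.succ_ne_zero, zero_div, sub_zero, sub_eq_zero] at key
  rw [div_mul_eq_mul_div, eq_div_iff (by positivity), key]
  ring

lemma integral_Ioi_pow_div_add_pow {x : ℝ} (hx : 0 < x) (a c : ℕ) :
    ∫ t in Ioi (0 : ℝ), t ^ a / (x + t) ^ (a + c + 2) =
      a ! * c ! / ((a + c + 1)! * x ^ (c + 1)) := by
  induction a with
  | zero =>
    simp only [pow_zero, zero_add]
    rw [integral_Ioi_one_div_add_pow hx c]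
    push_cast [Nat.factorial_zero, Nat.factorial_succ]
    field_simp
  | succ a ih =>
    rw [show a + 1 + c + 2 = a + c + 3 by omega, integral_Ioi_pow_succ_div_add_pow hx, ih,
      show a + 1 + c + 1 = (a + c + 1) + 1 by omega]
    push_cast [Nat.factorial_succ]
    field_simp
    ring

lemma Mnk_kernel_mul_pow {n k i : ℕ} (hkn : k ≤ n) (hin : i ≤ n) (x t : ℝ) :
    t ^ (n - k) / (x + t) ^ (2 * n - k + 2) * t ^ i =
      t ^ (n - k + i) / (x + t) ^ (n - k + i + (n - i) + 2) := by
  rw [show n - k + i + (n - i) + 2 = 2 * n - k + 2 by omega, pow_add]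
  ring

lemma Mnk_pow {n k i : ℕ} (hkn : k ≤ n) (hin : i ≤ n) {x : ℝ} (hx : 0 < x) :
    Mnk n k (fun t => t ^ i) x = (n - k + i)! * (n - i)! / (n ! * (n - k)!) * x ^ i := by
  simp only [Mnk, Mnk_kernel_mul_pow hkn hin, integral_Ioi_pow_div_add_pow hx,
    show n - k + i + (n - i) + 1 = 2 * n - k + 1 by omega]
  rw [show n + 1 = (n - i + 1) + i by omega, pow_add]
  field_simp

lemma Mnk_sum_mul_pow {n k m : ℕ} (hkn : k ≤ n) (hmn : m ≤ n) {x : ℝ} (hx : 0 < x)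
    (c : ℕ → ℝ) :
    Mnk n k (fun t => ∑ i ∈ Finset.range (m + 1), c i * t ^ i) x =
      ∑ i ∈ Finset.range (m + 1), c i * Mnk n k (fun t => t ^ i) x := by
  have hint : ∀ i ∈ Finset.range (m + 1), IntegrableOn
      (fun t => c i * (t ^ (n - k) / (x + t) ^ (2 * n - k + 2) * t ^ i)) (Ioi 0) := by
    intro i hi
    have hin : i ≤ n := by rw [Finset.mem_range] at hi; omega
    simp only [Mnk_kernel_mul_pow hkn hin]
    exact (integrableOn_pow_div_add_pow hx (by omega)).const_mul _
  simp only [Mnk, Finset.mul_sum, mul_left_comm _ (c _)]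
  rw [integral_finsetSum _ hint, Finset.mul_sum]
  exact Finset.sum_congr rfl fun i _ => by rw [integral_const_mul]; ring

theorem Mnk_central_moment_sum_general (k n m : ℕ) (hkn : k ≤ n)
    (hmn : m ≤ n) (x : ℝ) (hx : 0 < x) :
    Mnk n k (fun t => (t - x) ^ m) x =
      (∑ j ∈ Finset.range (m + 1),
          (-1 : ℝ) ^ j * (m.choose j : ℝ) *
            (((n - m + j).factorial : ℝ) * ((n - k + m - j).factorial : ℝ)) /
              ((n.factorial : ℝ) * ((n - k).factorial : ℝ))) * x ^ m := by
  have hbinom : (fun t : ℝ => (t - x) ^ m) =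
      fun t => ∑ i ∈ Finset.range (m + 1), (m.choose i * (-x) ^ (m - i)) * t ^ i := by
    funext t
    rw [sub_eq_add_neg, add_pow]
    exact Finset.sum_congr rfl fun i _ => by ring
  rw [hbinom, Mnk_sum_mul_pow hkn hmn hx, Finset.sum_mul, ← Finset.sum_range_reflect]
  refine Finset.sum_congr rfl fun i hi => ?_
  have him : i ≤ m := Nat.lt_succ_iff.mp (Finset.mem_range.mp hi)
  have hxm : x ^ m = x ^ i * x ^ (m - i) := by rw [← pow_add, Nat.add_sub_cancel' him]
  rw [add_tsub_cancel_right, Mnk_pow hkn (by omega) hx, Nat.sub_sub_self him,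
    Nat.choose_symm him, show n - k + (m - i) = n - k + m - i by omega,
    show n - (m - i) = n - m + i by omega, hxm, neg_pow]
  ring

/-- Central moments of the Gamma-type operator as an alternating sum. -/
theorem Mnk_central_moment_sum (k n m : ℕ) (hk : 1 ≤ k) (hkn : k ≤ n)
    (hm : m ≤ n - k) (hmn : m ≤ n) (x : ℝ) (hx : 0 < x) :
    Mnk n k (fun t => (t - x) ^ m) x =
      (∑ j ∈ Finset.range (m + 1),
          (-1 : ℝ) ^ j * (m.choose j : ℝ) *
            (((n - m + j).factorial : ℝ) * ((n - k + m - j).factorial : ℝ)) /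
              ((n.factorial : ℝ) * ((n - k).factorial : ℝ))) * x ^ m :=
  Mnk_central_moment_sum_general k n m hkn hmn x hx
end

section
/- Fix p ∈ ℕ, f ∈ C_p and h > 0, and define the Steklov mean f_h(x) = (4/h²) ∫_0^{h/2} ∫_0^{h/2} [2f(x+s+t) − f(x+2(s+t))] ds dt for x ≥ 0. Then f_h is twice differentiable, its second derivative satisfies f_h''(x) = (1/h²)(8·Δ_{h/2}² f(x) − Δ_h² f(x)) for all x ≥ 0, and consequently ‖f_h''‖_p ≤ (9/h²)·ω_p²(f; h). -/
open MeasureTheory Set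

/-! Writing `G` for the second primitive of `f`, evaluating first the inner and then the outer
integral gives `f_h = (8 Δ²_{h/2} G - Δ²_h G) / h²`. Since `Δ²_c` commutes with differentiation,
`f_h'` and `f_h''` are the same combination of the first primitive and of `f` itself. The norm
bound is then the triangle inequality together with `ω_p²(f; h/2) ≤ ω_p²(f; h)`; the weight
estimate `w_p(x) ≤ 2^p (1 + c^p) w_p(x + c)` is what makes the weighted suprema finite, so that
the junk value of `⨆` never enters. -/

noncomputable def primitive (φ : ℝ → ℝ) (y : ℝ) : ℝ := ∫ u in (0 : ℝ)..y, φ u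

noncomputable def steklovDelta2 (h : ℝ) (F : ℝ → ℝ) (x : ℝ) : ℝ :=
  1 / h ^ 2 * (8 * Delta2 (h / 2) F x - Delta2 h F x)

section Primitive

variable {φ : ℝ → ℝ}

theorem hasDerivAt_primitive (hφ : Continuous φ) (y : ℝ) : HasDerivAt (primitive φ) (φ y) y :=
  (hφ.integral_hasStrictDerivAt 0 y).hasDerivAt

theorem continuous_primitive (hφ : Continuous φ) : Continuous (primitive φ) :=
  intervalIntegral.continuous_primitive hφ.intervalIntegrable 0

theorem integral_comp_add_mul_eq_primitive (hφ : Continuous φ) (c : ℝ) {k : ℝ} (hk : k ≠ 0)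
    (a : ℝ) :
    ∫ t in (0 : ℝ)..a, φ (c + k * t) = (primitive φ (c + k * a) - primitive φ c) / k := by
  rw [intervalIntegral.integral_comp_add_mul φ hk, mul_zero, add_zero, smul_eq_mul, primitive,
    primitive, intervalIntegral.integral_interval_sub_left (hφ.intervalIntegrable _ _)
      (hφ.intervalIntegrable _ _), inv_mul_eq_div]

theorem integral_integral_comp_add_mul (hφ : Continuous φ) (x : ℝ) {k : ℝ} (hk : k ≠ 0)
    (a : ℝ) : ∫ s in (0 : ℝ)..a, ∫ t in (0 : ℝ)..a, φ (x + k * (s + t)) =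
      Delta2 (k * a) (primitive (primitive φ)) x / k ^ 2 := by
  have hF := continuous_primitive hφ
  simp_rw [show ∀ s t, x + k * (s + t) = x + k * s + k * t by intros; ring,
    integral_comp_add_mul_eq_primitive hφ _ hk,
    show ∀ s, x + k * s + k * a = x + k * a + k * s by intros; ring]
  rw [intervalIntegral.integral_div, intervalIntegral.integral_sub
      ((by fun_prop : Continuous fun s => primitive φ (x + k * a + k * s)).intervalIntegrable _ _)
      ((by fun_prop : Continuous fun s => primitive φ (x + k * s)).intervalIntegrable _ _),
    integral_comp_add_mul_eq_primitive hF _ hk, integral_comp_add_mul_eq_primitive hF _ hk, Delta2,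
    show x + k * a + k * a = x + 2 * (k * a) by ring]
  field_simp
  ring

end Primitive

theorem hasDerivAt_Delta2 {F F' : ℝ → ℝ} (hF : ∀ y, HasDerivAt F (F' y) y) (c x : ℝ) :
    HasDerivAt (Delta2 c F) (Delta2 c F' x) x :=
  (((hF _).comp_add_const x (2 * c)).sub (((hF _).comp_add_const x c).const_mul 2)).add (hF x)

theorem hasDerivAt_steklovDelta2 {F F' : ℝ → ℝ} (hF : ∀ y, HasDerivAt F (F' y) y) (h x : ℝ) :
    HasDerivAt (steklovDelta2 h F) (steklovDelta2 h F' x) x :=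
  (((hasDerivAt_Delta2 hF _ x).const_mul 8).sub (hasDerivAt_Delta2 hF _ x)).const_mul _

theorem steklov_eq_steklovDelta2 {f : ℝ → ℝ} (hf : Continuous f) (h : ℝ) :
    steklov f h = steklovDelta2 h (primitive (primitive f)) := by
  funext x
  have hint : ∀ k s, IntervalIntegrable (fun t => f (x + k * (s + t))) volume 0 (h / 2) :=
    fun k s => (by fun_prop : Continuous fun t => f (x + k * (s + t))).intervalIntegrable _ _
  have hint₂ : ∀ k, IntervalIntegrable (fun s => ∫ t in (0 : ℝ)..h / 2, f (x + k * (s + t)))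
      volume 0 (h / 2) := fun k =>
    (intervalIntegral.continuous_parametric_intervalIntegral_of_continuous'
      (by fun_prop) _ _).intervalIntegrable _ _
  simp_rw [steklov, show ∀ s t, x + s + t = x + 1 * (s + t) by intros; ring]
  rw [intervalIntegral.integral_congr fun s _ => intervalIntegral.integral_sub
      ((hint 1 s).const_mul 2) (hint 2 s)]
  simp_rw [intervalIntegral.integral_const_mul]
  rw [intervalIntegral.integral_sub ((hint₂ 1).const_mul 2) (hint₂ 2),
    intervalIntegral.integral_const_mul, integral_integral_comp_add_mul hf x one_ne_zero,
    integral_integral_comp_add_mul hf x two_ne_zero, steklovDelta2, one_mul,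
    mul_div_cancel₀ _ two_ne_zero]
  ring

section EqOnIci

variable {f g : ℝ → ℝ}

theorem Delta2_eqOn (hfg : EqOn f g (Ici 0)) {c : ℝ} (hc : 0 ≤ c) :
    EqOn (Delta2 c f) (Delta2 c g) (Ici 0) :=
  fun x (hx : 0 ≤ x) => by
    simp only [Delta2, hfg (mem_Ici.2 hx), hfg (mem_Ici.2 (by linarith : 0 ≤ x + c)),
      hfg (mem_Ici.2 (by linarith : 0 ≤ x + 2 * c))]

theorem steklovDelta2_eqOn (hfg : EqOn f g (Ici 0)) {h : ℝ} (hh : 0 ≤ h) :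
    EqOn (steklovDelta2 h f) (steklovDelta2 h g) (Ici 0) := fun x hx => by
  simp only [steklovDelta2, Delta2_eqOn hfg (div_nonneg hh zero_le_two) hx, Delta2_eqOn hfg hh hx]

theorem steklov_eqOn (hfg : EqOn f g (Ici 0)) {h : ℝ} (hh : 0 ≤ h) :
    EqOn (steklov f h) (steklov g h) (Ici 0) :=
  fun x (hx : 0 ≤ x) => by
    unfold steklov
    congr 1
    refine intervalIntegral.integral_congr fun s hs =>
      intervalIntegral.integral_congr fun t ht => ?_
    rw [uIcc_of_le (div_nonneg hh zero_le_two)] at hs ht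
    have := hs.1
    have := ht.1
    simp only [hfg (mem_Ici.2 (by linarith : 0 ≤ x + s + t)),
      hfg (mem_Ici.2 (by linarith : 0 ≤ x + 2 * (s + t)))]

end EqOnIci

section WeightedNorm

variable {p : ℕ} {f : ℝ → ℝ} {B : ℝ}

theorem wp_pos (p : ℕ) {x : ℝ} (hx : 0 ≤ x) : 0 < wp p x := by
  unfold wp
  split_ifs
  · exact one_pos
  · exact one_div_pos.2 (add_pos_of_pos_of_nonneg one_pos (pow_nonneg hx p))

theorem continuousOn_wp (p : ℕ) : ContinuousOn (wp p) (Ici 0) := by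
  unfold wp
  split_ifs
  · exact continuousOn_const
  · exact continuousOn_const.div (by fun_prop) fun _ hx =>
      (add_pos_of_pos_of_nonneg one_pos (pow_nonneg hx p)).ne'

theorem CpMem.continuousOn (hf : CpMem p f) : ContinuousOn f (Ici 0) :=
  (((continuousOn_wp p).inv₀ fun _ hx => (wp_pos p hx).ne').mul hf.2.continuousOn).congr
    fun x hx => (inv_mul_cancel_left₀ (wp_pos p hx).ne' (f x)).symm

theorem one_add_add_pow_le {x c : ℝ} (hx : 0 ≤ x) (hc : 0 ≤ c) (p : ℕ) :
    1 + (x + c) ^ p ≤ 2 ^ p * (1 + c ^ p) * (1 + x ^ p) := by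
  have hxc := add_pow_le hx hc p
  have h2 : (2 : ℝ) ^ (p - 1) ≤ 2 ^ p := pow_le_pow_right₀ one_le_two (Nat.sub_le p 1)
  have h1 : (1 : ℝ) ≤ 2 ^ p := one_le_pow₀ one_le_two
  have hxp := pow_nonneg hx p
  have hcp := pow_nonneg hc p
  nlinarith [mul_le_mul_of_nonneg_right h2 (add_nonneg hxp hcp), mul_nonneg hxp hcp,
    mul_le_mul_of_nonneg_right h1 (mul_nonneg hxp hcp)]

theorem wp_le_mul_wp_add (p : ℕ) {x c : ℝ} (hx : 0 ≤ x) (hc : 0 ≤ c) :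
    wp p x ≤ 2 ^ p * (1 + c ^ p) * wp p (x + c) := by
  unfold wp
  split_ifs with hp
  · simp [hp]
  · rw [mul_one_div, div_le_div_iff₀ (add_pos_of_pos_of_nonneg one_pos (pow_nonneg hx p))
      (add_pos_of_pos_of_nonneg one_pos (pow_nonneg (add_nonneg hx hc) p))]
    linarith [one_add_add_pow_le hx hc p]

theorem wp_mul_abs_comp_add_le (hB : ∀ x ≥ (0 : ℝ), |wp p x * f x| ≤ B) {x c d : ℝ}
    (hx : 0 ≤ x) (hc : 0 ≤ c) (hcd : c ≤ d) :
    wp p x * |f (x + c)| ≤ 2 ^ p * (1 + d ^ p) * B := by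
  have hxc : 0 ≤ x + c := add_nonneg hx hc
  have hB₀ : 0 ≤ B := (abs_nonneg _).trans (hB 0 le_rfl)
  have hBxc : wp p (x + c) * |f (x + c)| ≤ B := by
    simpa only [abs_mul, abs_of_pos (wp_pos p hxc)] using hB _ hxc
  calc wp p x * |f (x + c)| ≤ 2 ^ p * (1 + c ^ p) * wp p (x + c) * |f (x + c)| := by
        gcongr
        exact wp_le_mul_wp_add p hx hc
    _ ≤ 2 ^ p * (1 + c ^ p) * B := by
        rw [mul_assoc]
        gcongr
    _ ≤ 2 ^ p * (1 + d ^ p) * B := by gcongr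

theorem wp_mul_abs_Delta2_le (hB : ∀ x ≥ (0 : ℝ), |wp p x * f x| ≤ B) {x c d : ℝ}
    (hx : 0 ≤ x) (hc : 0 ≤ c) (hcd : 2 * c ≤ d) :
    wp p x * |Delta2 c f x| ≤ 4 * (2 ^ p * (1 + d ^ p) * B) := by
  have h₂ := wp_mul_abs_comp_add_le hB hx (by linarith) hcd
  have h₁ := wp_mul_abs_comp_add_le hB hx hc (d := d) (by linarith)
  have h₀ := wp_mul_abs_comp_add_le hB hx le_rfl (d := d) (by linarith)
  rw [add_zero] at h₀
  have htri : |Delta2 c f x| ≤ |f (x + 2 * c)| + 2 * |f (x + c)| + |f x| :=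
    (abs_add_le _ _).trans (by
      gcongr
      exact (abs_sub _ _).trans_eq (by rw [abs_mul, abs_two]))
  nlinarith [mul_le_mul_of_nonneg_left htri (wp_pos p hx).le]

theorem le_pNorm {g : ℝ → ℝ} {M : ℝ} (hM : ∀ x ≥ (0 : ℝ), wp p x * |g x| ≤ M) {x : ℝ}
    (hx : 0 ≤ x) : wp p x * |g x| ≤ pNorm p g :=
  le_ciSup (f := fun y : {y : ℝ // 0 ≤ y} => wp p y.1 * |g y.1|)
    ⟨M, by rintro _ ⟨y, rfl⟩; exact hM y.1 y.2⟩ ⟨x, hx⟩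

theorem pNorm_le {g : ℝ → ℝ} {M : ℝ} (hM : ∀ x ≥ (0 : ℝ), wp p x * |g x| ≤ M) :
    pNorm p g ≤ M :=
  have : Nonempty {y : ℝ // 0 ≤ y} := ⟨⟨0, le_rfl⟩⟩
  ciSup_le fun y => hM y.1 y.2

theorem pNorm_Delta2_le_omega2 (hB : ∀ x ≥ (0 : ℝ), |wp p x * f x| ≤ B) {c δ : ℝ}
    (hc : 0 < c) (hcδ : c ≤ δ) : pNorm p (Delta2 c f) ≤ omega2 p f δ :=
  le_ciSup (f := fun c : {c : ℝ // 0 < c ∧ c ≤ δ} => pNorm p (Delta2 c.1 f))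
    ⟨_, by
      rintro _ ⟨c, rfl⟩
      exact pNorm_le fun x hx => wp_mul_abs_Delta2_le hB hx c.2.1.le
        (mul_le_mul_of_nonneg_left c.2.2 zero_le_two)⟩ ⟨c, hc, hcδ⟩

theorem wp_mul_abs_Delta2_le_omega2 (hB : ∀ x ≥ (0 : ℝ), |wp p x * f x| ≤ B) {x c δ : ℝ}
    (hx : 0 ≤ x) (hc : 0 < c) (hcδ : c ≤ δ) : wp p x * |Delta2 c f x| ≤ omega2 p f δ :=
  (le_pNorm (fun _ hy => wp_mul_abs_Delta2_le hB hy hc.le le_rfl) hx).trans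
    (pNorm_Delta2_le_omega2 hB hc hcδ)

theorem pNorm_steklovDelta2_le (hB : ∀ x ≥ (0 : ℝ), |wp p x * f x| ≤ B) {h : ℝ}
    (hh : 0 < h) :
    pNorm p (steklovDelta2 h f) ≤ 9 / h ^ 2 * omega2 p f h := pNorm_le fun x hx => by
  have hw := (wp_pos p hx).le
  have h₁ := wp_mul_abs_Delta2_le_omega2 hB hx (half_pos hh) (half_le_self hh.le)
  have h₂ := wp_mul_abs_Delta2_le_omega2 hB hx hh le_rfl
  have htri :
      |8 * Delta2 (h / 2) f x - Delta2 h f x| ≤ 8 * |Delta2 (h / 2) f x| + |Delta2 h f x| :=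
    (abs_sub _ _).trans_eq (by rw [abs_mul, abs_of_pos (by norm_num : (0 : ℝ) < 8)])
  calc wp p x * |steklovDelta2 h f x|
      = 1 / h ^ 2 * (wp p x * |8 * Delta2 (h / 2) f x - Delta2 h f x|) := by
        rw [steklovDelta2, abs_mul, abs_of_pos (by positivity : (0 : ℝ) < 1 / h ^ 2),
          mul_left_comm]
    _ ≤ 1 / h ^ 2 * (8 * omega2 p f h + omega2 p f h) := by
        gcongr
        nlinarith [mul_le_mul_of_nonneg_left htri hw]
    _ = 9 / h ^ 2 * omega2 p f h := by ring

end WeightedNorm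

/-- The Steklov mean is twice differentiable with
`f_h''(x) = (1/h²)(8·Δ_{h/2}²f(x) − Δ_h²f(x))` and `‖f_h''‖_p ≤ (9/h²)·ω_p²(f;h)`. -/
theorem steklov_second_derivative (p : ℕ) (f : ℝ → ℝ) (hf : CpMem p f)
    (h : ℝ) (hh : 0 < h) :
    ∃ fh' : ℝ → ℝ,
      (∀ x ≥ (0 : ℝ), HasDerivWithinAt (steklov f h) (fh' x) (Ici 0) x) ∧
      (∀ x ≥ (0 : ℝ),
        HasDerivWithinAt fh'
          (1 / h ^ 2 * (8 * Delta2 (h / 2) f x - Delta2 h f x)) (Ici 0) x) ∧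
      pNorm p (fun x => 1 / h ^ 2 * (8 * Delta2 (h / 2) f x - Delta2 h f x)) ≤
        9 / h ^ 2 * omega2 p f h := by
  -- a continuous extension of `f` to `ℝ`, to apply the fundamental theorem of calculus globally
  set g : ℝ → ℝ := fun y => f (max y 0)
  have hg : Continuous g := hf.continuousOn.comp_continuous (by fun_prop) fun y => le_max_right y 0
  have hgf : EqOn g f (Ici 0) := fun y hy => congrArg f (max_eq_left hy)
  have hF : ∀ y, HasDerivAt (primitive g) (g y) y := hasDerivAt_primitive hg
  have hG : ∀ y, HasDerivAt (primitive (primitive g)) (primitive g y) y :=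
    hasDerivAt_primitive (continuous_primitive hg)
  obtain ⟨B, hB⟩ := hf.1
  refine ⟨steklovDelta2 h (primitive g), fun x hx => ?_, fun x hx => ?_,
    pNorm_steklovDelta2_le hB hh⟩
  · have hg' := hasDerivAt_steklovDelta2 hG h x
    rw [← steklov_eq_steklovDelta2 hg] at hg'
    exact hg'.hasDerivWithinAt.congr_of_mem (steklov_eqOn hgf.symm hh.le) hx
  · have hf' := (hasDerivAt_steklovDelta2 hF h x).hasDerivWithinAt (s := Ici 0)
    rwa [steklovDelta2_eqOn hgf hh.le hx] at hf'
end
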